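/- In the FRT algebra O_q(SO(N)), for i < j with i ≠ j', the relations u^j_1 u^i_N = q u^i_N u^j_1 and u^i_1 u^j_N = q u^j_N u^i_1 + (q² − 1) u^i_N u^j_1 hold. -/

import Mathlib

/-! For `i < j` with `i ≠ j'`, the entries `R^{ij}_{kl}` and `R^{ji}_{kl}` are supported on
`(k, l) ∈ {(i, j), (j, i)}`, while `R^{lk}_{N1}` is `q⁻¹` at `(l, k) = (N, 1)` and vanishes
elsewhere, since `θ(l − N) = 0`. So the RTT relations with indices `(i, j, N, 1)` and
`(j, i, N, 1)` each collapse to a two- or three-term identity, and solving them for the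
products on their right-hand sides gives the two relations. -/

/-- Heaviside step function: `θ(x) = 1` for `x > 0`, `0` otherwise. -/
noncomputable def heav (x : ℤ) : ℝ := if 0 < x then 1 else 0

/-- Kronecker delta. -/
noncomputable def kdelta (i j : ℕ) : ℝ := if i = j then 1 else 0

/-- `ρ_i = N/2 − i` for `i < i'`, `ρ_i = 0` for `i = i'`, and `ρ_{i'} = −ρ_i`
(with `i' = N + 1 − i`). -/
noncomputable def rho (N i : ℕ) : ℝ :=
  if 2 * i < N + 1 then (N : ℝ) / 2 - i
  else if 2 * i = N + 1 then 0
  else (N : ℝ) / 2 + 1 - i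

/-- The R-matrix of `O_q(SO(N))`:
`R^{ij}_{mn} = q^{δ_{ij} − δ_{ij'}} δ_{im} δ_{jn}
 + (q − q⁻¹) θ(i−m) (δ_{jm} δ_{in} − δ_{ji'} δ_{mn'} q^{−ρ_j − ρ_m})`. -/
noncomputable def Rmat (N : ℕ) (q : ℝ) (i j m n : ℕ) : ℝ :=
  q ^ ((if i = j then (1 : ℤ) else 0) - (if i = N + 1 - j then 1 else 0)) *
      kdelta i m * kdelta j n +
    (q - q⁻¹) * heav ((i : ℤ) - m) *
      (kdelta j m * kdelta i n -
        kdelta j (N + 1 - i) * kdelta m (N + 1 - n) * q ^ (-(rho N j) - rho N m))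

lemma Rmat_of_lt (N : ℕ) (q : ℝ) {i j : ℕ} (hij : i < j) (hj : j ≤ N) (hne : i ≠ N + 1 - j)
    (k l : ℕ) : Rmat N q i j k l = if k = i ∧ l = j then 1 else 0 := by
  have hji : ¬ j = N + 1 - i := by omega
  unfold Rmat kdelta heav
  rw [if_neg hij.ne, if_neg hne, if_neg hji]
  simp only [sub_zero, zpow_zero, one_mul, zero_mul]
  split_ifs <;> first | (exfalso; omega) | norm_num

lemma Rmat_of_gt (N : ℕ) (q : ℝ) {i j : ℕ} (hij : i < j) (hj : j ≤ N) (hne : i ≠ N + 1 - j)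
    (k l : ℕ) :
    Rmat N q j i k l =
      (if k = j ∧ l = i then 1 else 0) + (if k = i ∧ l = j then q - q⁻¹ else 0) := by
  have hji : ¬ j = N + 1 - i := by omega
  unfold Rmat kdelta heav
  rw [if_neg hij.ne', if_neg hji, if_neg hne]
  simp only [sub_zero, zpow_zero, one_mul, zero_mul]
  split_ifs <;> first | (exfalso; omega) | norm_num

lemma Rmat_last_one (N : ℕ) (q : ℝ) (hN : 2 ≤ N) {l : ℕ} (hl : l ≤ N) (k : ℕ) :
    Rmat N q l k N 1 = if k = 1 ∧ l = N then q⁻¹ else 0 := by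
  unfold Rmat kdelta heav
  rw [if_neg (by omega : ¬ (0 : ℤ) < (l : ℤ) - (N : ℤ))]
  simp only [mul_zero, zero_mul, add_zero]
  split_ifs <;> first | (exfalso; omega) | simp

lemma Finset.sum_sum_ite_and_smul {ι κ R M : Type*} [DecidableEq ι] [DecidableEq κ]
    [Semiring R] [AddCommMonoid M] [Module R M] {s : Finset ι} {t : Finset κ} {i : ι} {j : κ}
    (hi : i ∈ s) (hj : j ∈ t) (c : R) (g : ι → κ → M) :
    ∑ k ∈ s, ∑ l ∈ t, (if k = i ∧ l = j then c else 0) • g k l = c • g i j := by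
  simp [ite_and, ite_smul, hi, hj]

lemma sum_sum_Rmat_last_one_smul {M : Type*} [AddCommMonoid M] [Module ℝ M] (N : ℕ) (q : ℝ)
    (hN : 2 ≤ N) (g : ℕ → ℕ → M) :
    ∑ k ∈ Finset.Icc 1 N, ∑ l ∈ Finset.Icc 1 N, Rmat N q l k N 1 • g k l = q⁻¹ • g 1 N := by
  calc
    _ = ∑ k ∈ Finset.Icc 1 N, ∑ l ∈ Finset.Icc 1 N,
          (if k = 1 ∧ l = N then q⁻¹ else 0) • g k l := by
      refine Finset.sum_congr rfl fun k _ => Finset.sum_congr rfl fun l hl => ?_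
      rw [Rmat_last_one N q hN (Finset.mem_Icc.mp hl).2]
    _ = q⁻¹ • g 1 N :=
      Finset.sum_sum_ite_and_smul (by simp; omega) (by simp; omega) q⁻¹ g

def RTTRelation {A : Type*} [Ring A] [Module ℝ A] (N : ℕ) (q : ℝ) (u : ℕ → ℕ → A) : Prop :=
  ∀ i j m n : ℕ, 1 ≤ i → i ≤ N → 1 ≤ j → j ≤ N → 1 ≤ m → m ≤ N → 1 ≤ n → n ≤ N →
    ∑ k ∈ Finset.Icc 1 N, ∑ l ∈ Finset.Icc 1 N, Rmat N q i j k l • (u k m * u l n) =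
    ∑ k ∈ Finset.Icc 1 N, ∑ l ∈ Finset.Icc 1 N, Rmat N q l k m n • (u j k * u i l)

namespace RTTRelation

variable {A : Type*} [Ring A] [Module ℝ A] {N : ℕ} {q : ℝ} {u : ℕ → ℕ → A}
  {i j : ℕ}

lemma mul_last_one_of_lt (h : RTTRelation N q u) (hi : 1 ≤ i) (hij : i < j) (hj : j ≤ N)
    (hne : i ≠ N + 1 - j) : u i N * u j 1 = q⁻¹ • (u j 1 * u i N) := by
  have hrtt := h i j N 1 hi (by omega) (by omega) hj (by omega) le_rfl le_rfl (by omega)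
  simp only [Rmat_of_lt N q hij hj hne] at hrtt
  rwa [Finset.sum_sum_ite_and_smul (by simp; omega) (by simp; omega), one_smul,
    sum_sum_Rmat_last_one_smul N q (by omega)] at hrtt

lemma mul_last_one_of_gt (h : RTTRelation N q u) (hi : 1 ≤ i) (hij : i < j) (hj : j ≤ N)
    (hne : i ≠ N + 1 - j) :
    u j N * u i 1 + (q - q⁻¹) • (u i N * u j 1) = q⁻¹ • (u i 1 * u j N) := by
  have hrtt := h j i N 1 (by omega) hj hi (by omega) (by omega) le_rfl le_rfl (by omega)
  simp only [Rmat_of_gt N q hij hj hne, add_smul, Finset.sum_add_distrib] at hrtt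
  rwa [Finset.sum_sum_ite_and_smul (by simp; omega) (by simp; omega), one_smul,
    Finset.sum_sum_ite_and_smul (by simp; omega) (by simp; omega),
    sum_sum_Rmat_last_one_smul N q (by omega)] at hrtt

end RTTRelation

theorem stmt14 {A : Type*} [Ring A] [Algebra ℝ A] (N : ℕ) (q : ℝ) (hq : 1 < q)
    (u : ℕ → ℕ → A)
    (hRTT : ∀ i j m n : ℕ, 1 ≤ i → i ≤ N → 1 ≤ j → j ≤ N → 1 ≤ m → m ≤ N → 1 ≤ n → n ≤ N →
      ∑ k ∈ Finset.Icc 1 N, ∑ l ∈ Finset.Icc 1 N, Rmat N q i j k l • (u k m * u l n) =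
      ∑ k ∈ Finset.Icc 1 N, ∑ l ∈ Finset.Icc 1 N, Rmat N q l k m n • (u j k * u i l)) :
    ∀ i j : ℕ, 1 ≤ i → i < j → j ≤ N → i ≠ N + 1 - j →
      u j 1 * u i N = q • (u i N * u j 1) ∧
      u i 1 * u j N = q • (u j N * u i 1) + (q ^ 2 - 1) • (u i N * u j 1) := by
  intro i j hi hij hj hne
  have hqq : q * q⁻¹ = 1 := mul_inv_cancel₀ (zero_lt_one.trans hq).ne'
  have hrtt : RTTRelation N q u := hRTT
  constructor
  · rw [hrtt.mul_last_one_of_lt hi hij hj hne, smul_smul, hqq, one_smul]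
  · calc u i 1 * u j N = q • (q⁻¹ • (u i 1 * u j N)) := by rw [smul_smul, hqq, one_smul]
      _ = q • (u j N * u i 1 + (q - q⁻¹) • (u i N * u j 1)) := by
        rw [hrtt.mul_last_one_of_gt hi hij hj hne]
      _ = q • (u j N * u i 1) + (q ^ 2 - 1) • (u i N * u j 1) := by
        rw [smul_add, smul_smul, mul_sub, hqq, sq]
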